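/- If p is an odd prime, then the polynomial (C_p(x) − 2)/(x − 2) ∈ ℤ[x] (equivalently U_p(x)² where C_p(x) − 2 = (x−2)·U_p(x)²; here the degree-(p−1) quotient) has the property that U_p(x) = S_{(p+1)/2}(x) + S_{(p−1)/2}(x) is irreducible over ℚ. -/

import Mathlib

open Polynomial

/-- Normalized Chebyshev polynomial of the first kind: `C 0 = 2`, `C 1 = X`,
`C (n+2) = X * C (n+1) - C n`. -/
noncomputable def chebC : ℕ → Polynomial ℤ
  | 0 => 2
  | 1 => X
  | n + 2 => X * chebC (n + 1) - chebC n

/-- Normalized Chebyshev polynomial of the second kind: `S 0 = 0`, `S 1 = 1`,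
`S (n+2) = X * S (n+1) - S n`. -/
noncomputable def chebS : ℕ → Polynomial ℤ
  | 0 => 0
  | 1 => 1
  | n + 2 => X * chebS (n + 1) - chebS n

/-!
Write `p = 2k + 1` and `f(x) = U(x + 2)`, where `U = S_{k+1} + S_k`. Then `f` is monic with
`f(0) = U(2) = p`, and shifting `(x - 2) U² = C_p - 2` gives `x f² = C_p(x + 2) - 2`. Since `C_p` is
the Dickson polynomial `D_p(x, 1) ≡ x^p (mod p)`, the right-hand side is `≡ (x + 2)^p - 2 ≡ x^p`,
so `f ≡ x^k (mod p)`. Thus `f` is Eisenstein at `p`, hence irreducible over `ℤ`, and so is `U`;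
Gauss's lemma transfers this to `ℚ`.
-/

/-- The paper's `U_{2k+1}`, indexed by `k`. -/
noncomputable def chebU (k : ℕ) : ℤ[X] := chebS (k + 1) + chebS k

lemma chebC_add_two (n : ℕ) : chebC (n + 2) = X * chebC (n + 1) - chebC n := rfl

lemma chebU_zero : chebU 0 = 1 := by simp [chebU, chebS]

lemma chebU_one : chebU 1 = X + 1 := by simp [chebU, chebS]

lemma chebU_add_two (k : ℕ) : chebU (k + 2) = X * chebU (k + 1) - chebU k := by
  simp only [chebU, chebS]; ring

lemma eval_two_chebU (k : ℕ) : (chebU k).eval 2 = 2 * k + 1 := by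
  induction k using Nat.twoStepInduction with
  | zero => simp [chebU_zero]
  | one => norm_num [chebU_one]
  | more n h₀ h₁ =>
    rw [chebU_add_two, eval_sub, eval_mul, eval_X, h₀, h₁]; push_cast; ring

lemma monic_chebU (k : ℕ) : (chebU k).Monic := by
  suffices (chebU k).Monic ∧ (chebU k).natDegree = k from this.1
  induction k using Nat.twoStepInduction with
  | zero => simp [chebU_zero]
  | one => rw [chebU_one]; exact ⟨monic_X_add_C 1, natDegree_X_add_C 1⟩
  | more n h₀ h₁ =>
    have hXm : (X * chebU (n + 1)).Monic := monic_X.mul h₁.1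
    have hlt : (chebU n).natDegree < (X * chebU (n + 1)).natDegree := by
      rw [natDegree_X_mul h₁.1.ne_zero, h₁.2, h₀.2]; omega
    rw [chebU_add_two]
    refine ⟨hXm.sub_of_left (degree_lt_degree hlt), ?_⟩
    rw [natDegree_sub_eq_left_of_natDegree_lt hlt, natDegree_X_mul h₁.1.ne_zero, h₁.2]

lemma X_sub_two_mul_chebU (k : ℕ) : (X - 2) * chebU k = chebC (k + 1) - chebC k := by
  induction k using Nat.twoStepInduction with
  | zero => simp [chebU_zero, chebC]
  | one => simp [chebU_one, chebC]; ring
  | more n h₀ h₁ =>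
    rw [chebU_add_two]
    linear_combination X * h₁ - h₀ - chebC_add_two (n + 1) + chebC_add_two n

lemma chebC_eq_chebyshev_C (n : ℕ) : chebC n = Chebyshev.C ℤ n := by
  induction n using Nat.twoStepInduction with
  | zero => simp [chebC]
  | one => simp [chebC]
  | more n h₀ h₁ =>
    rw [chebC_add_two, h₀, h₁]; push_cast; rw [Chebyshev.C_add_two]

lemma chebC_two_mul_add_one_sub_two (k : ℕ) :
    chebC (2 * k + 1) - 2 = (X - 2) * chebU k ^ 2 := by
  -- `(X - 2)² U_k² = (C_{k+1} - C_k)²`; expand with `C_m C_n = C_{m+n} + C_{m-n}` and cancel `X - 2`.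
  have hU := X_sub_two_mul_chebU k
  simp only [chebC_eq_chebyshev_C] at hU ⊢
  push_cast at hU ⊢
  have h₁ := Chebyshev.C_mul_C ℤ (k + 1) (k + 1)
  have h₂ := Chebyshev.C_mul_C ℤ (k + 1) k
  have h₃ := Chebyshev.C_mul_C ℤ k k
  have h₄ := Chebyshev.C_add_two ℤ (2 * k)
  simp only [sub_self, add_sub_cancel_left, Chebyshev.C_zero, Chebyshev.C_one] at h₁ h₂ h₃
  ring_nf at hU h₁ h₂ h₃ h₄ ⊢
  have hX : (X - 2 : ℤ[X]) ≠ 0 := by exact_mod_cast X_sub_C_ne_zero (2 : ℤ)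
  refine mul_left_cancel₀ hX ?_
  linear_combination (-(X - 2) * chebU k - (Chebyshev.C ℤ (1 + k) - Chebyshev.C ℤ k)) * hU
    - h₁ + 2 * h₂ - h₃ - h₄

lemma map_chebC_zmod_prime (p : ℕ) [Fact p.Prime] :
    (chebC p).map (Int.castRingHom (ZMod p)) = X ^ p := by
  rw [chebC_eq_chebyshev_C, Chebyshev.map_C, ← dickson_one_one_eq_chebyshev_C]
  exact dickson_one_one_zmod_p p

lemma Polynomial.Monic.taylor {R : Type*} [Semiring R] {f : R[X]} (hf : f.Monic) (r : R) :
    (f.taylor r).Monic :=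
  (leadingCoeff_taylor r f).trans hf

lemma Polynomial.Monic.eq_of_sq_eq {R : Type*} [CommRing R] [IsDomain R] {f g : R[X]}
    (hf : f.Monic) (hg : g.Monic) (h : f ^ 2 = g ^ 2) : f = g := by
  rcases sq_eq_sq_iff_eq_or_eq_neg.mp h with h | h
  · exact h
  · have h₁ := hf.leadingCoeff
    rw [h, leadingCoeff_neg, hg.leadingCoeff] at h₁
    have h₁' : (-1 : R[X]) = 1 := by simpa using congrArg C h₁
    rw [h, ← neg_one_mul, h₁', one_mul]

lemma Polynomial.irreducible_of_map_zmod_eq_X_pow {f : ℤ[X]} {p n : ℕ} (hp : p.Prime)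
    (hf : f.Monic) (hmap : f.map (Int.castRingHom (ZMod p)) = X ^ n) (hn : 0 < n)
    (h0 : ¬ (p : ℤ) ^ 2 ∣ f.coeff 0) : Irreducible f := by
  have := Fact.mk hp
  have hdeg : f.natDegree = n := by
    rw [← hf.natDegree_map (Int.castRingHom (ZMod p)), hmap, natDegree_X_pow]
  have hP : (Ideal.span {(p : ℤ)}).IsPrime :=
    (Ideal.span_singleton_prime (by exact_mod_cast hp.ne_zero)).2 (Nat.prime_iff_prime_int.1 hp)
  refine (hf.isEisensteinAt_of_mem_of_notMem hP.ne_top (fun {i} hi => ?_) ?_).irreducible hP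
    hf.isPrimitive (hdeg ▸ hn)
  · rw [Ideal.mem_span_singleton, ← ZMod.intCast_zmod_eq_zero_iff_dvd,
      ← eq_intCast (Int.castRingHom _), ← coeff_map, hmap, coeff_X_pow, if_neg (by omega)]
  · rwa [Ideal.span_singleton_pow, Ideal.mem_span_singleton]

lemma map_taylor_two_chebU_eq_X_pow {k : ℕ} (hp : (2 * k + 1).Prime) :
    ((chebU k).taylor 2).map (Int.castRingHom (ZMod (2 * k + 1))) = X ^ k := by
  have := Fact.mk hp
  have hℤ : X * ((chebU k).taylor 2) ^ 2 = (chebC (2 * k + 1)).taylor 2 - 2 := by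
    have h := congrArg (taylor 2) (chebC_two_mul_add_one_sub_two k)
    rw [← map_ofNat C 2] at h ⊢
    simp only [map_sub, taylor_mul, taylor_pow, taylor_X, taylor_C, add_sub_cancel_right] at h
    exact h.symm
  have h := congrArg (map (Int.castRingHom (ZMod (2 * k + 1)))) hℤ
  rw [Polynomial.map_mul, Polynomial.map_pow, map_X, Polynomial.map_sub, map_taylor (chebC _),
    map_chebC_zmod_prime, taylor_X_pow, add_pow_char, ← C_pow, ZMod.pow_card,
    Polynomial.map_ofNat, map_ofNat (Int.castRingHom _) 2, map_ofNat C 2,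
    add_sub_cancel_right] at h
  exact ((monic_chebU k).taylor 2 |>.map _).eq_of_sq_eq (monic_X_pow k)
    (mul_left_cancel₀ X_ne_zero (h.trans (by ring)))

/-- For an odd prime `p`, `U_p = S_{(p+1)/2} + S_{(p−1)/2}` is irreducible over `ℚ`. -/
theorem chebU_prime_irreducible (p : ℕ) (hp : p.Prime) (hodd : Odd p) :
    Irreducible ((chebS ((p + 1) / 2) + chebS ((p - 1) / 2)).map (Int.castRingHom ℚ)) := by
  obtain ⟨k, rfl⟩ := hodd
  rw [show (2 * k + 1 + 1) / 2 = k + 1 by omega, show (2 * k + 1 - 1) / 2 = k by omega]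
  change Irreducible ((chebU k).map _)
  have hk : 0 < k := Nat.pos_of_ne_zero (by rintro rfl; exact Nat.not_prime_one hp)
  have hcoeff : ¬ ((2 * k + 1 : ℕ) : ℤ) ^ 2 ∣ ((chebU k).taylor 2).coeff 0 := by
    rw [taylor_coeff_zero, eval_two_chebU]
    push_cast
    intro h
    nlinarith [Int.le_of_dvd (by positivity) h]
  have hirr : Irreducible ((chebU k).taylor 2) :=
    irreducible_of_map_zmod_eq_X_pow hp ((monic_chebU k).taylor 2)
      (map_taylor_two_chebU_eq_X_pow hp) hk hcoeff
  rw [← IsPrimitive.Int.irreducible_iff_irreducible_map_cast (monic_chebU k).isPrimitive]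
  exact (MulEquiv.irreducible_iff (taylorEquiv (2 : ℤ))).mp hirr
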